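/- Fix an integer m ≥ 3 and let C_m = (V, E) be the cycle with vertex set V = {1, 2, …, m} and hyperedges e_i = {i, i+1} for i = 1, …, m−1 together with e_m = {m, 1}. Then the minimum weight of an edge-discriminator on C_m equals ⌈m(m+1)/4⌉; that is, there exists an edge-discriminator of weight ⌈m(m+1)/4⌉, and every edge-discriminator on C_m has weight at least ⌈m(m+1)/4⌉. -/

import Mathlib

/-!
The `m` edge sums of an edge-discriminator are distinct positive integers, so they add up to at
least `1 + ⋯ + m`; since every vertex lies on exactly two edges of the cycle they add up to twice
the weight, whence `4 · weight ≥ m(m + 1)`. Conversely, a labelling that climbs `0, 1, 1, 2, 2, …`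
along one arc and descends along the other realises the edge sums `1, …, m - 1` together with a
single sum `M = k + 1 + ⌊(m - 1)/2⌋`; choosing `k` according to `m mod 4` makes `M ∈ {m, m + 1}`
match the parity of `m(m + 1)/2`, which attains the bound.
-/

/-- `lam` is an edge-discriminator on the hypergraph with hyperedge family `E`
(vertices are natural numbers). -/
def IsEdgeDiscriminator (E : Finset (Finset ℕ)) (lam : ℕ → ℕ) : Prop :=
  (∀ e ∈ E, 0 < ∑ v ∈ e, lam v) ∧
  (∀ e ∈ E, ∀ f ∈ E, e ≠ f → ∑ v ∈ e, lam v ≠ ∑ v ∈ f, lam v)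

/-- The edge set of the cycle on vertices `{1, …, m}`. -/
def cycleEdges (m : ℕ) : Finset (Finset ℕ) :=
  insert ({m, 1} : Finset ℕ)
    ((Finset.Icc 1 (m - 1)).image (fun i => ({i, i + 1} : Finset ℕ)))

open Finset

theorem card_mul_succ_le_two_mul_sum {s : Finset ℕ} (h0 : 0 ∉ s) :
    #s * (#s + 1) ≤ 2 * ∑ x ∈ s, x := by
  have key : ∑ n ∈ range #s, (n + 1) ≤ ∑ x ∈ s, x := by
    have hpos : ∀ x ∈ s.map Nat.castEmbedding, (1 : ℤ) ≤ x := by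
      simp only [mem_map, Nat.castEmbedding_apply, forall_exists_index, and_imp]
      rintro _ x hx rfl
      exact_mod_cast Nat.pos_of_ne_zero (ne_of_mem_of_not_mem hx h0)
    have := sum_range_le_sum hpos
    simp only [card_map, sum_map, Nat.castEmbedding_apply, add_comm (1 : ℤ)] at this
    rw [← Nat.cast_sum] at this
    exact_mod_cast this
  have gauss := sum_range_id_mul_two (#s + 1)
  rw [sum_range_succ', add_zero, Nat.add_sub_cancel] at gauss
  linarith

theorem sum_Icc_one_id_mul_two (n : ℕ) : (∑ i ∈ Icc 1 n, i) * 2 = (n + 1) * n := by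
  have gauss := sum_range_id_mul_two (n + 1)
  rwa [Nat.range_succ_eq_Icc_zero, ← insert_Icc_add_one_left_eq_Icc (Nat.zero_le n),
    sum_insert (by simp), zero_add, Nat.add_sub_cancel] at gauss

section Discriminator

variable {E : Finset (Finset ℕ)} {lam : ℕ → ℕ}

theorem IsEdgeDiscriminator.injOn (h : IsEdgeDiscriminator E lam) :
    Set.InjOn (fun e => ∑ v ∈ e, lam v) E :=
  fun e he f hf hef => by_contra fun hne => h.2 e he f hf hne hef

theorem isEdgeDiscriminator_of_card_image (h0 : 0 ∉ E.image fun e => ∑ v ∈ e, lam v)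
    (hcard : #(E.image fun e => ∑ v ∈ e, lam v) = #E) : IsEdgeDiscriminator E lam :=
  ⟨fun _ he => Nat.pos_of_ne_zero fun h => h0 (h ▸ mem_image_of_mem _ he),
    fun _ he _ hf hne h => hne (card_image_iff.mp hcard he hf h)⟩

theorem IsEdgeDiscriminator.card_mul_succ_le (h : IsEdgeDiscriminator E lam) :
    #E * (#E + 1) ≤ 2 * ∑ e ∈ E, ∑ v ∈ e, lam v := by
  have h0 : 0 ∉ E.image fun e => ∑ v ∈ e, lam v := by
    simpa only [mem_image, not_exists, not_and] using fun e he => (h.1 e he).ne'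
  simpa only [card_image_of_injOn h.injOn, sum_image h.injOn] using card_mul_succ_le_two_mul_sum h0

end Discriminator

theorem sum_Icc_comp_succ_add_apply_one (f : ℕ → ℕ) (n : ℕ) :
    ∑ i ∈ Icc 1 n, f (i + 1) + f 1 = ∑ i ∈ Icc 1 (n + 1), f i := by
  rw [← insert_Icc_add_one_left_eq_Icc (a := 1) (b := n + 1) (by omega), sum_insert (by simp),
    add_comm, ← map_add_right_Icc, sum_map]
  rfl

theorem pair_succ_injective : Function.Injective fun i : ℕ => ({i, i + 1} : Finset ℕ) := by
  intro i j (h : ({i, i + 1} : Finset ℕ) = {j, j + 1})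
  have hi : i ∈ ({j, j + 1} : Finset ℕ) := by rw [← h]; simp
  have hj : j ∈ ({i, i + 1} : Finset ℕ) := by rw [h]; simp
  simp only [mem_insert, mem_singleton] at hi hj
  omega

theorem sum_pair_succ (f : ℕ → ℕ) (i : ℕ) : ∑ v ∈ ({i, i + 1} : Finset ℕ), f v = f i + f (i + 1) :=
  sum_pair (Nat.succ_ne_self i).symm

section Cycle

variable {m : ℕ}

theorem closing_notMem (hm : 3 ≤ m) :
    {m, 1} ∉ (Icc 1 (m - 1)).image fun i => ({i, i + 1} : Finset ℕ) := by
  simp only [mem_image, mem_Icc, not_exists, not_and]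
  intro i hi h
  have hi' : i ∈ ({m, 1} : Finset ℕ) := h ▸ by simp
  have hm' : m ∈ ({i, i + 1} : Finset ℕ) := h ▸ by simp
  simp only [mem_insert, mem_singleton] at hi' hm'
  omega

theorem card_cycleEdges (hm : 3 ≤ m) : #(cycleEdges m) = m := by
  rw [cycleEdges, card_insert_of_notMem (closing_notMem hm),
    card_image_of_injective _ pair_succ_injective, Nat.card_Icc]
  omega

theorem sum_cycleEdges {β : Type*} [AddCommMonoid β] (hm : 3 ≤ m) (g : Finset ℕ → β) :
    ∑ e ∈ cycleEdges m, g e = g {m, 1} + ∑ i ∈ Icc 1 (m - 1), g {i, i + 1} := by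
  rw [cycleEdges, sum_insert (closing_notMem hm), sum_image fun i _ j _ h => pair_succ_injective h]

theorem image_cycleEdges {α : Type*} [DecidableEq α] (g : Finset ℕ → α) :
    (cycleEdges m).image g = insert (g {m, 1}) ((Icc 1 (m - 1)).image fun i => g {i, i + 1}) := by
  rw [cycleEdges, image_insert, image_image]
  rfl

theorem sum_cycleEdges_sum_eq_two_mul (hm : 3 ≤ m) (f : ℕ → ℕ) :
    ∑ e ∈ cycleEdges m, ∑ v ∈ e, f v = 2 * ∑ v ∈ Icc 1 m, f v := by
  obtain ⟨n, rfl⟩ : ∃ n, m = n + 1 := ⟨m - 1, by omega⟩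
  rw [sum_cycleEdges hm, sum_pair (show n + 1 ≠ 1 by omega), Nat.add_sub_cancel]
  simp only [sum_pair_succ, sum_add_distrib]
  have top := sum_Icc_succ_top (show 1 ≤ n + 1 by omega) f
  have bot := sum_Icc_comp_succ_add_apply_one f n
  omega

theorem IsEdgeDiscriminator.cycleEdges_mul_succ_le_four_mul_sum {lam : ℕ → ℕ} (hm : 3 ≤ m)
    (h : IsEdgeDiscriminator (cycleEdges m) lam) : m * (m + 1) ≤ 4 * ∑ v ∈ Icc 1 m, lam v := by
  have := h.card_mul_succ_le
  rw [card_cycleEdges hm, sum_cycleEdges_sum_eq_two_mul hm] at this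
  omega

end Cycle

def cycleLabel (m k i : ℕ) : ℕ :=
  if i ≤ k + 1 then i / 2 else (m - i) / 2 + if (m - i) % 2 = 0 then k + 1 else 1

section CycleLabel

variable {m k : ℕ}

theorem cycleLabel_add_succ (hk : k + 2 ≤ m) (hpar : m % 2 = k % 2) {i : ℕ} (hi : i ≤ m - 1) :
    cycleLabel m k i + cycleLabel m k (i + 1) =
      if i ≤ k then i else if i = k + 1 then k + 1 + (m - 1) / 2 else m + k + 1 - i := by
  unfold cycleLabel
  split_ifs <;> omega

theorem cycleLabel_closing (hk : k + 2 ≤ m) : cycleLabel m k m + cycleLabel m k 1 = k + 1 := by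
  unfold cycleLabel
  split_ifs <;> omega

theorem image_cycleLabel (hk : k + 2 ≤ m) (hpar : m % 2 = k % 2) :
    (cycleEdges m).image (fun e => ∑ v ∈ e, cycleLabel m k v) =
      insert (k + 1 + (m - 1) / 2) (Icc 1 (m - 1)) := by
  rw [image_cycleEdges, sum_pair (show m ≠ 1 by omega), cycleLabel_closing hk]
  simp only [sum_pair_succ]
  ext s
  simp only [mem_insert, mem_image, mem_Icc]
  constructor
  · rintro (rfl | ⟨i, hi, rfl⟩)
    · omega
    · rw [cycleLabel_add_succ hk hpar hi.2]
      split_ifs <;> omega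
  · rintro (rfl | ⟨h1, h2⟩)
    · refine Or.inr ⟨k + 1, by omega, ?_⟩
      rw [cycleLabel_add_succ hk hpar (by omega)]
      simp
    · by_cases hs : s = k + 1
      · exact Or.inl hs
      · refine Or.inr ⟨if s ≤ k then s else m + k + 1 - s, by split_ifs <;> omega, ?_⟩
        rw [cycleLabel_add_succ hk hpar (by split_ifs <;> omega)]
        split_ifs <;> omega

theorem isEdgeDiscriminator_cycleLabel (hk : k + 2 ≤ m) (hpar : m % 2 = k % 2)
    (hM : m ≤ k + 1 + (m - 1) / 2) : IsEdgeDiscriminator (cycleEdges m) (cycleLabel m k) := by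
  apply isEdgeDiscriminator_of_card_image <;> rw [image_cycleLabel hk hpar]
  · simp only [mem_insert, mem_Icc]
    omega
  · rw [card_insert_of_notMem (by simp only [mem_Icc]; omega), Nat.card_Icc,
      card_cycleEdges (by omega)]
    omega

theorem four_mul_sum_cycleLabel (hk : k + 2 ≤ m) (hpar : m % 2 = k % 2)
    (hM : m ≤ k + 1 + (m - 1) / 2) :
    4 * ∑ v ∈ Icc 1 m, cycleLabel m k v = m * (m - 1) + 2 * (k + 1 + (m - 1) / 2) := by
  have hinj := (isEdgeDiscriminator_cycleLabel hk hpar hM).injOn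
  have h2W : ∑ s ∈ (cycleEdges m).image (fun e => ∑ v ∈ e, cycleLabel m k v), s =
      2 * ∑ v ∈ Icc 1 m, cycleLabel m k v := by
    rw [sum_image hinj, sum_cycleEdges_sum_eq_two_mul (by omega)]
  rw [image_cycleLabel hk hpar, sum_insert (by simp only [mem_Icc]; omega)] at h2W
  have gauss := sum_Icc_one_id_mul_two (m - 1)
  rw [Nat.sub_add_cancel (by omega), mul_comm] at gauss
  omega

theorem exists_isEdgeDiscriminator_cycleEdges (hm : 3 ≤ m) :
    ∃ lam, IsEdgeDiscriminator (cycleEdges m) lam ∧ 4 * ∑ v ∈ Icc 1 m, lam v < m * (m + 1) + 4 := by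
  obtain ⟨k, hk, hpar, hM, hM'⟩ : ∃ k, k + 2 ≤ m ∧ m % 2 = k % 2 ∧ m ≤ k + 1 + (m - 1) / 2 ∧
      k + 1 + (m - 1) / 2 ≤ m + 1 :=
    ⟨if m % 4 = 1 ∨ m % 4 = 2 then m / 2 + 1 else m / 2, by split_ifs <;> omega⟩
  refine ⟨cycleLabel m k, isEdgeDiscriminator_cycleLabel hk hpar hM, ?_⟩
  have hsq : m * (m - 1) + 2 * m = m * (m + 1) := by
    obtain ⟨n, rfl⟩ : ∃ n, m = n + 1 := ⟨m - 1, by omega⟩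
    rw [Nat.add_sub_cancel]; ring
  have := four_mul_sum_cycleLabel hk hpar hM
  omega

end CycleLabel

/-- The minimum weight of an edge-discriminator on the cycle `C_m` is
`⌈m(m+1)/4⌉ = (m(m+1)+3)/4` (natural number division). -/
theorem cycle_optimum (m : ℕ) (hm : 3 ≤ m) :
    (∃ lam : ℕ → ℕ, IsEdgeDiscriminator (cycleEdges m) lam ∧
      ∑ v ∈ Finset.Icc 1 m, lam v = (m * (m + 1) + 3) / 4) ∧
    (∀ lam : ℕ → ℕ, IsEdgeDiscriminator (cycleEdges m) lam →
      (m * (m + 1) + 3) / 4 ≤ ∑ v ∈ Finset.Icc 1 m, lam v) := by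
  obtain ⟨lam, hlam, hweight⟩ := exists_isEdgeDiscriminator_cycleEdges hm
  have hlower := hlam.cycleEdges_mul_succ_le_four_mul_sum hm
  refine ⟨⟨lam, hlam, by omega⟩, fun lam' h => ?_⟩
  have := h.cycleEdges_mul_succ_le_four_mul_sum hm
  omega
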